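/- Key lemma for the bit-chipping field: let τ̃ = [ã_1|...|ã_k] be a target simplex of bit-size n, and let τ = [2^{i_1}|...|2^{i_q}|b|a_{q+2}|...|a_k] be any not-fully-dyadic target simplex reachable from τ̃ in the V∂-graph of V_bc (with dyadic prefix of length q and breakpoint value b not a power of 2). Then a_i = ã_i for all i ≥ q+2 (the right part is inherited from τ̃), and either b = ã_{q+1} (τ is raw), or b < max(2^{i_1},...,2^{i_q}) and b ∈ B_{q+1}, where B_1 = ltrims(ã_1) and B_{j+1} = ltrims({ã_{j+1}, ã_j + ã_{j+1}} ∪ {2^i + ã_{j+1} : 0 ≤ i ≤ n-1} ∪ {b + ã_{j+1} : b ∈ B_j}). -/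

import Mathlib

/-!
Every vertex reachable from `τ̃` in the `V∂`-graph is a target that is fully dyadic or satisfies
the conclusion (strengthened to the invariant `Admissible`), or a non-target face of such a
target. A type (b) source always leads to a fully dyadic target. For a type (a) face `σ = ∂ᵢ τ`
of such a target `τ`, a case analysis on `i` shows that `V_bc σ` is again of this kind: the last
face and the faces right of the breakpoint would make `τ` a source itself; the first face and
merges of two equal powers of two shift the breakpoint one step left; merging two distinct powers
and splitting again swaps them into decreasing order; merges at the breakpoint produce `ltrim`
values that the recursion defining `B_j` was made to contain. The delicate case adds the last
dyadic entry `2 ^ a` to a breakpoint value `b ∈ B_{q+1}` lying below a larger dyadic entry: either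
`b < 2 ^ a` and `b` survives, or the sum carries past `2 * lpow b` and its `ltrim`-chain is part of
that of `b`.
-/

/-- `lpow b` is the largest power of 2 not exceeding `b` (for `b ≥ 1`). -/
def lpow (b : ℕ) : ℕ := 2 ^ Nat.log 2 b

/-- `ltrim b = b - lpow b`. -/
def ltrim (b : ℕ) : ℕ := b - lpow b

/-- All entries of the sequence are positive (nondegenerate simplex of `K(ℕ,1)`). -/
def posL (l : List ℕ) : Prop := ∀ a ∈ l, 1 ≤ a

/-- The length `q` of the dyadic part of `[a_1 | ⋯ | a_k]`: the largest `q` such that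
`a_1, …, a_q` are all powers of 2. -/
def dyLen (l : List ℕ) : ℕ :=
  (l.takeWhile fun a => a == 2 ^ Nat.log 2 a).length

/-- `l` is fully dyadic: all entries are powers of 2. -/
def fullyDyadic (l : List ℕ) : Prop := dyLen l = l.length

/-- Source simplices of type (a) of the bit-chipping field: not fully dyadic, with no
peak, i.e. the dyadic part `a_1 ≤ ⋯ ≤ a_q` is nondecreasing and (if nonempty) its last
entry is smaller than the breakpoint value `a_{q+1}`. -/
def srcA (l : List ℕ) : Prop :=
  dyLen l < l.length ∧
  (∀ i, i + 1 < dyLen l → l.getD i 0 ≤ l.getD (i + 1) 0) ∧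
  (∀ i, i + 1 = dyLen l → l.getD i 0 < l.getD (dyLen l) 0)

/-- The bit-chipping field on a type (a) source: split the breakpoint value `b` into
`lpow b | ltrim b`. -/
def VbcA (l : List ℕ) : List ℕ :=
  l.take (dyLen l) ++ [lpow (l.getD (dyLen l) 0), ltrim (l.getD (dyLen l) 0)] ++
    l.drop (dyLen l + 1)

/-- Source simplices of type (b) of the bit-chipping field: fully dyadic sequences
`a_1 ≤ ⋯ ≤ a_{k-1} < a_k` with `a_k ≥ 2`. -/
def srcB (l : List ℕ) : Prop :=
  fullyDyadic l ∧ l ≠ [] ∧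
  (∀ i, i + 2 < l.length → l.getD i 0 ≤ l.getD (i + 1) 0) ∧
  (∀ i, i + 2 = l.length → l.getD i 0 < l.getD (i + 1) 0) ∧
  2 ≤ l.getD (l.length - 1) 0

/-- The bit-chipping field on a type (b) source: split the last entry into two equal
halves. -/
def VbcB (l : List ℕ) : List ℕ :=
  l.dropLast ++ [l.getD (l.length - 1) 0 / 2, l.getD (l.length - 1) 0 / 2]

/-- The bit-chipping vector field `V_bc`, as a relation: `VbcRel σ τ` iff `σ` is a
source (of type (a) or (b)) and `τ = V_bc σ`. -/
def VbcRel (σ τ : List ℕ) : Prop :=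
  (srcA σ ∧ τ = VbcA σ) ∨ (srcB σ ∧ τ = VbcB σ)

/-- The face operator `∂ᵢ` on a simplex `[a_1 | ⋯ | a_k]` of `K(ℕ,1)`: `∂_0` deletes the
first entry, `∂_k` the last, and for `0 < i < k`, `∂ᵢ` replaces `a_i, a_{i+1}` by their
sum. -/
def faceN (i : ℕ) (l : List ℕ) : List ℕ :=
  if i = 0 then l.tail
  else if i = l.length then l.dropLast
  else l.take (i - 1) ++ [l.getD (i - 1) 0 + l.getD i 0] ++ l.drop (i + 1)

/-- The set of iterated `ltrim` values of `a` (empty if `a` is a power of 2). -/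
def ltrims : ℕ → Finset ℕ
  | a =>
    if h : ltrim a = 0 then ∅
    else
      have ha : 0 < a := by
        rcases Nat.eq_zero_or_pos a with h0 | h0
        · exfalso; apply h; simp [h0, ltrim, lpow]
        · exact h0
      have : ltrim a < a := Nat.sub_lt ha (Nat.pow_pos (by norm_num))
      insert (ltrim a) (ltrims (ltrim a))
  termination_by a => a

/-- The sets `B_1, B_2, …` of the key lemma: `B_1 = ltrims (ã_1)` and
`B_{j+1} = ltrims({ã_{j+1}, ã_j + ã_{j+1}} ∪ {2^i + ã_{j+1} : 0 ≤ i ≤ n-1} ∪ {b + ã_{j+1} : b ∈ B_j})`. -/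
def Bset (ta : ℕ → ℕ) (n : ℕ) : ℕ → Finset ℕ
  | 0 => ∅
  | 1 => ltrims (ta 1)
  | (j + 2) =>
      (insert (ta (j + 2)) (insert (ta (j + 1) + ta (j + 2))
        (((Finset.range n).image fun i => 2 ^ i + ta (j + 2)) ∪
          ((Bset ta n (j + 1)).image fun b => b + ta (j + 2))))).biUnion ltrims

/-- The edges of the `V∂`-graph of the bit-chipping field. -/
def edgeBc (x y : List ℕ) : Prop :=
  (posL x ∧ VbcRel x y) ∨
  ((∃ s, posL s ∧ VbcRel s x) ∧
    ∃ i ≤ x.length, y = faceN i x ∧ posL y ∧ ¬ VbcRel y x ∧ ¬ ∃ s', posL s' ∧ VbcRel s' y)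

/-- The bit-size of a simplex: `size [a_1 | ⋯ | a_k] = Σᵢ (1 + ⌊log₂ (aᵢ + 1)⌋)`. -/
def sizeL (l : List ℕ) : ℕ := (l.map fun a => 1 + Nat.log 2 (a + 1)).sum

def IsPowTwo (n : ℕ) : Prop := n = 2 ^ Nat.log 2 n

instance : DecidablePred IsPowTwo := fun n => inferInstanceAs (Decidable (n = _))

lemma isPowTwo_two_pow (k : ℕ) : IsPowTwo (2 ^ k) := by
  rw [IsPowTwo, Nat.log_pow one_lt_two]

lemma isPowTwo_lpow (b : ℕ) : IsPowTwo (lpow b) := isPowTwo_two_pow _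

lemma lpow_pos (b : ℕ) : 0 < lpow b := Nat.two_pow_pos _

lemma lpow_le_self {b : ℕ} (hb : 0 < b) : lpow b ≤ b := Nat.pow_log_le_self 2 hb.ne'

lemma lt_two_mul_lpow (b : ℕ) : b < 2 * lpow b := by
  simpa only [lpow, ← pow_succ'] using Nat.lt_pow_succ_log_self one_lt_two b

lemma lpow_eq_of_le_of_lt {k m : ℕ} (h₁ : 2 ^ k ≤ m) (h₂ : m < 2 * 2 ^ k) : lpow m = 2 ^ k := by
  rw [lpow, Nat.log_eq_of_pow_le_of_lt_pow h₁ (by rwa [pow_succ'])]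

lemma ltrim_eq_of_le_of_lt {k m : ℕ} (h₁ : 2 ^ k ≤ m) (h₂ : m < 2 * 2 ^ k) :
    ltrim m = m - 2 ^ k := by
  rw [ltrim, lpow_eq_of_le_of_lt h₁ h₂]

lemma lpow_add_ltrim {b : ℕ} (hb : 0 < b) : lpow b + ltrim b = b := by
  have := lpow_le_self hb
  unfold ltrim; omega

lemma ltrim_lt_lpow (b : ℕ) : ltrim b < lpow b := by
  have := lt_two_mul_lpow b
  have := lpow_pos b
  unfold ltrim; omega

lemma ltrim_lt_self {b : ℕ} (hb : 0 < b) : ltrim b < b := by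
  have := lpow_pos b
  unfold ltrim; omega

lemma ltrim_eq_zero_iff {b : ℕ} (hb : 0 < b) : ltrim b = 0 ↔ IsPowTwo b := by
  have := lpow_le_self hb
  simp only [ltrim, IsPowTwo, lpow] at *
  omega

lemma ltrim_pos {b : ℕ} (hb : 0 < b) (h : ¬ IsPowTwo b) : 0 < ltrim b :=
  Nat.pos_of_ne_zero fun h₀ => h ((ltrim_eq_zero_iff hb).mp h₀)

lemma ltrim_two_pow_add {a b : ℕ} (h : b < 2 ^ a) : ltrim (2 ^ a + b) = b := by
  rw [ltrim_eq_of_le_of_lt (Nat.le_add_right _ _) (by omega)]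
  omega

lemma ltrim_lpow_add {b : ℕ} (hb : 0 < b) : ltrim (lpow b + b) = ltrim b := by
  have h₁ := lpow_le_self hb
  have h₂ := lt_two_mul_lpow b
  have hk : lpow b * 2 = 2 ^ (Nat.log 2 b + 1) := (pow_succ _ _).symm
  rw [ltrim_eq_of_le_of_lt (k := Nat.log 2 b + 1) (by omega) (by omega), ← hk, ltrim]
  omega

lemma two_mul_lpow_le_of_lt {b x : ℕ} (hb : 0 < b) (hx : IsPowTwo x) (h : b < x) :
    2 * lpow b ≤ x := by
  rw [hx, lpow, ← pow_succ']
  refine Nat.pow_le_pow_right two_pos (Nat.log_lt_of_lt_pow hb.ne' ?_)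
  rwa [← hx]

lemma ltrims_eq (a : ℕ) :
    ltrims a = if ltrim a = 0 then ∅ else insert (ltrim a) (ltrims (ltrim a)) := by
  rw [ltrims]; split <;> rfl

lemma ltrims_congr {a b : ℕ} (h : ltrim a = ltrim b) : ltrims a = ltrims b := by
  rw [ltrims_eq a, ltrims_eq b, h]

lemma ltrim_mem_ltrims {a : ℕ} (h : ltrim a ≠ 0) : ltrim a ∈ ltrims a := by
  rw [ltrims_eq, if_neg h]
  exact Finset.mem_insert_self _ _

lemma ltrims_ltrim_subset (a : ℕ) : ltrims (ltrim a) ⊆ ltrims a := by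
  rw [ltrims_eq a]
  split_ifs with h
  · rw [h, ltrims_eq, if_pos (by simp [ltrim, lpow])]
  · exact Finset.subset_insert _ _

lemma ltrims_subset_of_mem {a x : ℕ} (hx : x ∈ ltrims a) : ltrims x ⊆ ltrims a := by
  induction a using Nat.strong_induction_on with
  | _ a ih =>
    rw [ltrims_eq] at hx
    split_ifs at hx with h
    · simp at hx
    have ha : 0 < a := Nat.pos_of_ne_zero fun ha => h (by simp [ha, ltrim, lpow])
    rcases Finset.mem_insert.mp hx with rfl | hx
    · exact ltrims_ltrim_subset a
    · exact (ih _ (ltrim_lt_self ha) hx).trans (ltrims_ltrim_subset a)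

/-- The carry runs down the `ltrim`-chain of `b` until it meets a `b'` with `lpow b' = 2 ^ a`,
and `ltrim (lpow b' + b') = ltrim b'`. -/
lemma ltrims_two_pow_add_subset {a b : ℕ} (hb : 0 < b) (ha : 2 ^ a ≤ lpow b)
    (hcarry : 2 * lpow b ≤ 2 ^ a + b) : ltrims (2 ^ a + b) ⊆ ltrims b := by
  induction b using Nat.strong_induction_on with
  | _ b ih =>
    rcases ha.eq_or_lt with heq | hlt
    · rw [heq, ltrims_congr (ltrim_lpow_add hb)]
    obtain ⟨f, hf⟩ : ∃ f, lpow b = 2 * 2 ^ f := by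
      refine ⟨Nat.log 2 b - 1, ?_⟩
      have : Nat.log 2 b ≠ 0 := by
        rintro h0
        rw [lpow, h0] at hlt
        exact absurd hlt (by simp)
      rw [lpow, ← pow_succ', Nat.sub_add_cancel (Nat.pos_of_ne_zero this)]
    have haf : 2 ^ a ≤ 2 ^ f := by
      rw [hf] at hlt
      have : a < f + 1 := (Nat.pow_lt_pow_iff_right one_lt_two).mp (by rwa [pow_succ'])
      exact Nat.pow_le_pow_right two_pos (by omega)
    have hb₂ := lt_two_mul_lpow b
    have hb₁ := lpow_add_ltrim hb
    have hlpow' : lpow (ltrim b) = 2 ^ f := lpow_eq_of_le_of_lt (by omega) (by omega)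
    have hsame : ltrim (2 ^ a + b) = ltrim (2 ^ a + ltrim b) := by
      have h₁ : 2 * (2 * 2 ^ f) = 2 ^ (f + 2) := by ring
      rw [ltrim_eq_of_le_of_lt (k := f + 2) (by omega) (by omega),
        ltrim_eq_of_le_of_lt (k := f + 1) (by rw [pow_succ]; omega) (by rw [pow_succ]; omega)]
      rw [pow_succ]; omega
    rw [ltrims_congr hsame]
    exact (ih _ (ltrim_lt_self hb) (by omega) (by omega) (by omega)).trans
      (ltrims_ltrim_subset b)

lemma le_lpow {x c : ℕ} (hx : IsPowTwo x) (h : x ≤ c) : x ≤ lpow c := by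
  rw [hx, lpow]
  refine Nat.pow_le_pow_right two_pos (Nat.le_log_of_pow_le one_lt_two ?_)
  rwa [← hx]

lemma isPowTwo_ltrim_add {x y : ℕ} (hx : IsPowTwo x) (hy : IsPowTwo y) (h : ¬ IsPowTwo (x + y)) :
    IsPowTwo (ltrim (x + y)) := by
  rw [hx, hy] at h ⊢
  rcases lt_trichotomy (Nat.log 2 x) (Nat.log 2 y) with hlt | heq | hlt
  · rw [add_comm, ltrim_two_pow_add (Nat.pow_lt_pow_right one_lt_two hlt)]
    exact isPowTwo_two_pow _
  · rw [heq, ← two_mul, ← pow_succ'] at h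
    exact absurd (isPowTwo_two_pow _) h
  · rw [ltrim_two_pow_add (Nat.pow_lt_pow_right one_lt_two hlt)]
    exact isPowTwo_two_pow _

lemma ltrim_two_pow_add_eq_or_mem_ltrims {a b x : ℕ} (hb : 0 < b) (hx : IsPowTwo x) (hbx : b < x)
    (hxc : x ≤ 2 ^ a + b) (hne : ltrim (2 ^ a + b) ≠ 0) :
    ltrim (2 ^ a + b) = b ∨ ltrim (2 ^ a + b) ∈ ltrims b := by
  rcases Nat.lt_or_ge b (2 ^ a) with h | h
  · exact Or.inl (ltrim_two_pow_add h)
  · exact Or.inr <| ltrims_two_pow_add_subset hb (le_lpow (isPowTwo_two_pow a) h)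
      ((two_mul_lpow_le_of_lt hb hx hbx).trans hxc) (ltrim_mem_ltrims hne)

section Bset

variable (ta : ℕ → ℕ) (n : ℕ)

lemma ltrims_subset_Bset_add_two {y j : ℕ}
    (hy : y ∈ insert (ta (j + 2)) (insert (ta (j + 1) + ta (j + 2))
      (((Finset.range n).image fun i => 2 ^ i + ta (j + 2)) ∪
        ((Bset ta n (j + 1)).image fun b => b + ta (j + 2))))) :
    ltrims y ⊆ Bset ta n (j + 2) := by
  intro x hx
  rw [Bset]
  exact Finset.mem_biUnion.mpr ⟨y, hy, hx⟩

lemma ltrims_subset_Bset {x j : ℕ} (hx : x ∈ Bset ta n j) : ltrims x ⊆ Bset ta n j := by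
  match j with
  | 0 => simp [Bset] at hx
  | 1 =>
    rw [Bset] at hx ⊢
    exact ltrims_subset_of_mem hx
  | j + 2 =>
    rw [Bset] at hx
    obtain ⟨y, hy, hxy⟩ := Finset.mem_biUnion.mp hx
    exact (ltrims_subset_of_mem hxy).trans (ltrims_subset_Bset_add_two ta n hy)

end Bset

section Lists

variable {l : List ℕ}

lemma getD_mem {m : ℕ} (h : m < l.length) : l.getD m 0 ∈ l := by
  rw [List.getD_eq_getElem l 0 h]
  exact List.getElem_mem _

lemma getD_take {k m : ℕ} (h : m < k) : (l.take k).getD m 0 = l.getD m 0 := by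
  rw [List.getD_eq_getElem?_getD, List.getD_eq_getElem?_getD, List.getElem?_take, if_pos h]

lemma getD_drop (k m : ℕ) : (l.drop k).getD m 0 = l.getD (k + m) 0 := by
  simp [List.getD_eq_getElem?_getD, List.getElem?_drop]

lemma getD_tail (m : ℕ) : l.tail.getD m 0 = l.getD (m + 1) 0 := by
  rw [← List.drop_one, getD_drop, add_comm]

lemma getD_dropLast {m : ℕ} (h : m < l.length - 1) : l.dropLast.getD m 0 = l.getD m 0 := by
  rw [List.dropLast_eq_take, getD_take h]

lemma eq_take_append_getD_cons_drop {q : ℕ} (h : q < l.length) :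
    l = l.take q ++ l.getD q 0 :: l.drop (q + 1) := by
  conv_lhs => rw [← List.take_append_drop q l]
  rw [List.drop_eq_getElem_cons h, List.getD_eq_getElem l 0 h]

lemma getD_mem_take {m k : ℕ} (hm : m < k) (hml : m < l.length) : l.getD m 0 ∈ l.take k := by
  rw [← getD_take hm]
  exact getD_mem (by simp only [List.length_take]; omega)

lemma exists_getD_eq_of_mem_take {k z : ℕ} (h : z ∈ l.take k) :
    ∃ m, m < k ∧ m < l.length ∧ z = l.getD m 0 := by
  obtain ⟨m, hm, rfl⟩ := List.mem_iff_getElem.mp h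
  simp only [List.length_take] at hm
  exact ⟨m, by omega, by omega, by rw [← getD_take (by omega : m < k), List.getD_eq_getElem]⟩

lemma le_foldr_max {x : ℕ} (h : x ∈ l) : x ≤ l.foldr max 0 :=
  List.le_max_of_le' 0 h le_rfl

lemma exists_lt_of_lt_foldr_max {a : ℕ} (h : a < l.foldr max 0) : ∃ x ∈ l, a < x := by
  by_contra! hl
  exact h.not_ge (List.max_le_of_forall_le l a hl)

lemma lt_foldr_max_take_of_forall_le {l' : List ℕ} {a K : ℕ} (h : a < (l.take K).foldr max 0)
    (hle : ∀ m < K, m < l.length → ∃ m' < K, m' < l'.length ∧ l.getD m 0 ≤ l'.getD m' 0) :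
    a < (l'.take K).foldr max 0 := by
  obtain ⟨z, hz, haz⟩ := exists_lt_of_lt_foldr_max h
  obtain ⟨m, hm, hml, rfl⟩ := exists_getD_eq_of_mem_take hz
  obtain ⟨m', hm', hml', hle'⟩ := hle m hm hml
  exact haz.trans_le (List.le_max_of_le' 0 (getD_mem_take hm' hml') hle')

lemma getD_le_getD_of_le_succ {K m m' : ℕ}
    (h : ∀ i, i + 1 < K → l.getD i 0 ≤ l.getD (i + 1) 0) (hmm' : m ≤ m') (hm' : m' < K) :
    l.getD m 0 ≤ l.getD m' 0 := by
  induction m', hmm' using Nat.le_induction with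
  | base => rfl
  | succ m' _ ih => exact (ih (by omega)).trans (h m' hm')

lemma sum_lt_two_pow_sizeL (l : List ℕ) : l.sum < 2 ^ sizeL l := by
  induction l with
  | nil => simp [sizeL]
  | cons a l ih =>
    have hs : sizeL (a :: l) = (Nat.log 2 (a + 1) + 1) + sizeL l := by
      simp [sizeL, add_comm]
    have ha : a + 1 < 2 ^ (Nat.log 2 (a + 1) + 1) := Nat.lt_pow_succ_log_self one_lt_two _
    have h₁ : a + 2 ≤ 2 ^ (Nat.log 2 (a + 1) + 1) := ha
    have h₂ : l.sum + 1 ≤ 2 ^ sizeL l := ih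
    rw [hs, pow_add, List.sum_cons]
    calc a + l.sum < (a + 2) * (l.sum + 1) := by ring_nf; omega
      _ ≤ _ := Nat.mul_le_mul h₁ h₂

end Lists

section DyadicPrefix

variable {l : List ℕ}

lemma dyLen_le_length (l : List ℕ) : dyLen l ≤ l.length :=
  (List.takeWhile_sublist _).length_le

lemma dyLen_cons (a : ℕ) (l : List ℕ) :
    dyLen (a :: l) = if IsPowTwo a then dyLen l + 1 else 0 := by
  unfold dyLen
  split_ifs with h
  · rw [List.takeWhile_cons, if_pos (beq_iff_eq.mpr h), List.length_cons]
  · rw [List.takeWhile_cons, if_neg (by rwa [beq_iff_eq]), List.length_nil]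

lemma isPowTwo_getD_of_lt_dyLen {m : ℕ} (h : m < dyLen l) : IsPowTwo (l.getD m 0) := by
  induction l generalizing m with
  | nil => simp [dyLen] at h
  | cons a l ih =>
    rw [dyLen_cons] at h
    split_ifs at h with ha
    · cases m with
      | zero => simpa using ha
      | succ m => simpa using ih (by omega)
    · omega

lemma not_isPowTwo_getD_dyLen (h : dyLen l < l.length) : ¬ IsPowTwo (l.getD (dyLen l) 0) := by
  induction l with
  | nil => simp at h
  | cons a l ih =>
    rw [dyLen_cons] at h ⊢
    split_ifs at h ⊢ with ha
    · simpa using ih (by simpa using h)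
    · simpa using ha

lemma le_dyLen {k : ℕ} (hk : k ≤ l.length) (hp : ∀ m, m < k → IsPowTwo (l.getD m 0)) :
    k ≤ dyLen l := by
  by_contra! h
  exact not_isPowTwo_getD_dyLen (by omega) (hp _ h)

lemma dyLen_le {k : ℕ} (h : ¬ IsPowTwo (l.getD k 0)) : dyLen l ≤ k := by
  by_contra! hc
  exact h (isPowTwo_getD_of_lt_dyLen hc)

lemma dyLen_eq {k : ℕ} (hk : k < l.length) (hp : ∀ m, m < k → IsPowTwo (l.getD m 0))
    (h : ¬ IsPowTwo (l.getD k 0)) : dyLen l = k :=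
  (dyLen_le h).antisymm (le_dyLen hk.le hp)

lemma fullyDyadic_iff : fullyDyadic l ↔ ∀ m, m < l.length → IsPowTwo (l.getD m 0) :=
  ⟨fun h _ hm => isPowTwo_getD_of_lt_dyLen (by rw [fullyDyadic] at h; omega),
    fun h => (dyLen_le_length l).antisymm (le_dyLen le_rfl h)⟩

end DyadicPrefix

section VbcA

variable {σ : List ℕ}

lemma VbcA_eq (σ : List ℕ) :
    VbcA σ = σ.take (dyLen σ) ++ lpow (σ.getD (dyLen σ) 0) ::
      ltrim (σ.getD (dyLen σ) 0) :: σ.drop (dyLen σ + 1) := by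
  simp [VbcA]

lemma length_VbcA (hd : dyLen σ < σ.length) : (VbcA σ).length = σ.length + 1 := by
  rw [VbcA_eq]
  simp only [List.length_append, List.length_take, List.length_cons, List.length_drop]
  omega

lemma VbcA_getD_of_lt {m : ℕ} (hm : m < dyLen σ) : (VbcA σ).getD m 0 = σ.getD m 0 := by
  rw [VbcA_eq, List.getD_append _ _ _ _ (by simp; have := dyLen_le_length σ; omega)]
  exact getD_take hm

lemma VbcA_getD_dyLen (hd : dyLen σ < σ.length) :
    (VbcA σ).getD (dyLen σ) 0 = lpow (σ.getD (dyLen σ) 0) := by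
  rw [VbcA_eq, List.getD_append_right _ _ _ _ (by simp)]
  have : dyLen σ - (σ.take (dyLen σ)).length = 0 := by simp only [List.length_take]; omega
  rw [this, List.getD_cons_zero]

lemma VbcA_getD_dyLen_add_one (hd : dyLen σ < σ.length) :
    (VbcA σ).getD (dyLen σ + 1) 0 = ltrim (σ.getD (dyLen σ) 0) := by
  rw [VbcA_eq, List.getD_append_right _ _ _ _ (by simp)]
  have : dyLen σ + 1 - (σ.take (dyLen σ)).length = 1 := by simp only [List.length_take]; omega
  rw [this, List.getD_cons_succ, List.getD_cons_zero]

lemma VbcA_getD_of_le {m : ℕ} (hd : dyLen σ < σ.length) (hm : dyLen σ + 2 ≤ m) :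
    (VbcA σ).getD m 0 = σ.getD (m - 1) 0 := by
  rw [VbcA_eq, List.getD_append_right _ _ _ _ (by simp only [List.length_take]; omega)]
  have : m - (σ.take (dyLen σ)).length = (m - dyLen σ - 2) + 2 := by
    simp only [List.length_take]; omega
  rw [this, List.getD_cons_succ, List.getD_cons_succ, getD_drop]
  congr 1
  omega

lemma sum_VbcA (hd : dyLen σ < σ.length) (hc : 0 < σ.getD (dyLen σ) 0) :
    (VbcA σ).sum = σ.sum := by
  conv_rhs => rw [eq_take_append_getD_cons_drop hd]
  rw [VbcA_eq]
  simp only [List.sum_append, List.sum_cons]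
  have := lpow_add_ltrim hc
  omega

lemma posL_VbcA (hd : dyLen σ < σ.length) (hσ : posL σ) : posL (VbcA σ) := by
  intro x hx
  rw [VbcA_eq] at hx
  simp only [List.mem_append, List.mem_cons] at hx
  rcases hx with hx | rfl | rfl | hx
  · exact hσ x ((List.take_sublist _ _).mem hx)
  · exact lpow_pos _
  · exact ltrim_pos (hσ _ (getD_mem hd)) (not_isPowTwo_getD_dyLen hd)
  · exact hσ x ((List.drop_sublist _ _).mem hx)

lemma fullyDyadic_VbcB (h : srcB σ) : fullyDyadic (VbcB σ) := by
  obtain ⟨hfd, hne, -, -, h2⟩ := h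
  have hlast : IsPowTwo (σ.getD (σ.length - 1) 0) :=
    fullyDyadic_iff.mp hfd _ (by have := List.length_pos_iff.mpr hne; omega)
  obtain ⟨k, hk⟩ : ∃ k, σ.getD (σ.length - 1) 0 = 2 * 2 ^ k := by
    refine ⟨Nat.log 2 (σ.getD (σ.length - 1) 0) - 1, ?_⟩
    rw [← pow_succ', Nat.sub_add_cancel, ← hlast]
    exact Nat.le_log_of_pow_le one_lt_two (by omega)
  rw [fullyDyadic_iff]
  intro m hm
  unfold VbcB at hm ⊢
  have hdl : σ.dropLast.length = σ.length - 1 := List.length_dropLast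
  rcases Nat.lt_or_ge m (σ.length - 1) with h | h
  · rw [List.getD_append _ _ _ _ (by omega), getD_dropLast h]
    exact fullyDyadic_iff.mp hfd _ (by omega)
  · rw [List.getD_append_right _ _ _ _ (by omega), hk, Nat.mul_div_cancel_left _ two_pos]
    simp only [List.length_append, List.length_cons, List.length_nil] at hm
    obtain h' | h' : m - (σ.length - 1) = 0 ∨ m - (σ.length - 1) = 1 := by omega
    all_goals simpa [hdl, h'] using isPowTwo_two_pow k

end VbcA

section Faces

variable {t : List ℕ} {i m : ℕ}

lemma faceN_zero (t : List ℕ) : faceN 0 t = t.tail := by simp [faceN]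

lemma faceN_length_self (h : t.length ≠ 0) : faceN t.length t = t.dropLast := by
  simp [faceN, h]

lemma faceN_of_ne (h0 : i ≠ 0) (hl : i ≠ t.length) :
    faceN i t = t.take (i - 1) ++ (t.getD (i - 1) 0 + t.getD i 0) :: t.drop (i + 1) := by
  simp [faceN, h0, hl]

variable (h0 : i ≠ 0) (hi : i < t.length)
include h0 hi

lemma length_faceN : (faceN i t).length = t.length - 1 := by
  rw [faceN_of_ne h0 hi.ne]
  simp only [List.length_append, List.length_cons, List.length_take, List.length_drop]
  omega

lemma faceN_getD_of_lt (hm : m < i - 1) : (faceN i t).getD m 0 = t.getD m 0 := by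
  rw [faceN_of_ne h0 hi.ne, List.getD_append _ _ _ _ (by simp only [List.length_take]; omega)]
  exact getD_take hm

lemma faceN_getD_sub_one : (faceN i t).getD (i - 1) 0 = t.getD (i - 1) 0 + t.getD i 0 := by
  rw [faceN_of_ne h0 hi.ne, List.getD_append_right _ _ _ _ (by simp)]
  have : i - 1 - (t.take (i - 1)).length = 0 := by simp only [List.length_take]; omega
  rw [this, List.getD_cons_zero]

lemma faceN_getD_of_le (hm : i ≤ m) : (faceN i t).getD m 0 = t.getD (m + 1) 0 := by
  rw [faceN_of_ne h0 hi.ne, List.getD_append_right _ _ _ _ (by simp only [List.length_take]; omega)]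
  have : m - (t.take (i - 1)).length = (m - i) + 1 := by simp only [List.length_take]; omega
  rw [this, List.getD_cons_succ, getD_drop]
  congr 1
  omega

lemma sum_faceN : (faceN i t).sum = t.sum := by
  rw [faceN_of_ne h0 hi.ne]
  conv_rhs => rw [eq_take_append_getD_cons_drop (show i - 1 < t.length by omega)]
  rw [Nat.sub_add_cancel (Nat.pos_of_ne_zero h0), List.drop_eq_getElem_cons hi,
    ← List.getD_eq_getElem t 0 hi]
  simp only [List.sum_append, List.sum_cons]
  omega

end Faces

lemma faceN_add_one_getD_self {t : List ℕ} {k : ℕ} (hk : k + 1 < t.length) :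
    (faceN (k + 1) t).getD k 0 = t.getD k 0 + t.getD (k + 1) 0 := by
  simpa using faceN_getD_sub_one (i := k + 1) (by omega) hk

lemma getD_take_append_cons_cons_drop {t : List ℕ} {k : ℕ} (x y m : ℕ) (hk : k ≤ t.length) :
    (t.take k ++ x :: y :: t.drop (k + 2)).getD m 0 =
      if m = k then x else if m = k + 1 then y else t.getD m 0 := by
  have hlen : (t.take k).length = k := by simp [hk]
  rcases Nat.lt_or_ge m k with h | h
  · rw [List.getD_append _ _ _ _ (by omega), getD_take h, if_neg (by omega), if_neg (by omega)]
  rw [List.getD_append_right _ _ _ _ (by omega), hlen]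
  obtain rfl | rfl | h' : m = k ∨ m = k + 1 ∨ k + 2 ≤ m := by omega
  · simp
  · simp
  · rw [if_neg (by omega), if_neg (by omega), show m - k = (m - k - 2) + 2 by omega,
      List.getD_cons_succ, List.getD_cons_succ, getD_drop]
    congr 1
    omega

lemma VbcA_faceN_eq {t : List ℕ} {k : ℕ} (hk : k + 1 < t.length)
    (hd : dyLen (faceN (k + 1) t) = k) :
    VbcA (faceN (k + 1) t) = t.take k ++ lpow (t.getD k 0 + t.getD (k + 1) 0) ::
      ltrim (t.getD k 0 + t.getD (k + 1) 0) :: t.drop (k + 2) := by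
  have hc := faceN_add_one_getD_self hk
  have hlen : (t.take k).length = k := by simp only [List.length_take]; omega
  rw [VbcA_eq, hd, hc, faceN_of_ne (by omega) hk.ne, Nat.add_sub_cancel, List.take_left' hlen,
    List.drop_append, List.drop_of_length_le (by omega), hlen]
  simp

lemma dyLen_faceN_of_not_isPowTwo {t : List ℕ} {k : ℕ} (hk : k + 1 < t.length)
    (hkq : k ≤ dyLen t) (hc : ¬ IsPowTwo (t.getD k 0 + t.getD (k + 1) 0)) :
    dyLen (faceN (k + 1) t) = k :=
  dyLen_eq (by rw [length_faceN (by omega) hk]; omega)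
    (fun m hm => faceN_getD_of_lt (m := m) (by omega) hk (by omega) ▸
      isPowTwo_getD_of_lt_dyLen (by omega))
    (faceN_add_one_getD_self hk ▸ hc)

lemma isPowTwo_faceN_getD {t : List ℕ} {k K m : ℕ} (hkK : k + 1 < K) (hK : K ≤ t.length)
    (hpow : ∀ m < K, IsPowTwo (t.getD m 0)) (hc : IsPowTwo (t.getD k 0 + t.getD (k + 1) 0))
    (hm : m < K - 1) : IsPowTwo ((faceN (k + 1) t).getD m 0) := by
  obtain h | rfl | h : m < k ∨ k = m ∨ k + 1 ≤ m := by omega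
  · rw [faceN_getD_of_lt (by omega) (by omega) (by omega)]; exact hpow m (by omega)
  · rwa [faceN_add_one_getD_self (by omega)]
  · rw [faceN_getD_of_le (by omega) (by omega) h]; exact hpow _ (by omega)

section MergeSplit

variable {t : List ℕ} {k : ℕ} (hk : k + 1 < t.length) (hd : dyLen (faceN (k + 1) t) = k)
include hk hd

lemma dyLen_faceN_lt_length : dyLen (faceN (k + 1) t) < (faceN (k + 1) t).length := by
  rw [hd, length_faceN (by omega) hk]; omega

lemma length_VbcA_faceN : (VbcA (faceN (k + 1) t)).length = t.length := by
  rw [length_VbcA (dyLen_faceN_lt_length hk hd), length_faceN (by omega) hk]; omega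

lemma VbcA_faceN_getD (m : ℕ) :
    (VbcA (faceN (k + 1) t)).getD m 0 =
      if m = k then lpow (t.getD k 0 + t.getD (k + 1) 0)
      else if m = k + 1 then ltrim (t.getD k 0 + t.getD (k + 1) 0) else t.getD m 0 := by
  rw [VbcA_faceN_eq hk hd, getD_take_append_cons_cons_drop _ _ _ (by omega)]

lemma sum_VbcA_faceN (hpos : posL (faceN (k + 1) t)) : (VbcA (faceN (k + 1) t)).sum = t.sum := by
  have hσ := dyLen_faceN_lt_length hk hd
  rw [sum_VbcA hσ (hpos _ (getD_mem hσ)), sum_faceN (by omega) hk]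

end MergeSplit

lemma srcA.getD_lt_getD_dyLen {σ : List ℕ} (h : srcA σ) {m : ℕ} (hm : m < dyLen σ) :
    σ.getD m 0 < σ.getD (dyLen σ) 0 :=
  (getD_le_getD_of_le_succ h.2.1 (Nat.le_sub_one_of_lt hm) (by omega)).trans_lt
    (h.2.2 _ (by omega))

lemma not_srcA_of_fullyDyadic {σ : List ℕ} (h : fullyDyadic σ) : ¬ srcA σ :=
  fun hs => hs.1.ne h

lemma srcA_of_srcA_of_getD_eq {σ t : List ℕ} (hσ : dyLen t < σ.length) (ht : dyLen t < t.length)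
    (heq : ∀ m ≤ dyLen t, σ.getD m 0 = t.getD m 0) (hs : srcA σ) : srcA t := by
  have hd : dyLen σ = dyLen t :=
    dyLen_eq hσ (fun m hm => heq m hm.le ▸ isPowTwo_getD_of_lt_dyLen hm)
      (heq _ le_rfl ▸ not_isPowTwo_getD_dyLen ht)
  obtain ⟨-, hmono, hpeak⟩ := hs
  rw [hd] at hmono hpeak
  refine ⟨ht, fun m hm => ?_, fun m hm => ?_⟩
  · rw [← heq m (by omega), ← heq (m + 1) (by omega)]; exact hmono m hm
  · rw [← heq m (by omega), ← heq _ le_rfl]; exact hpeak m hm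

-- `𝔅[tt] j` is `B_j`, with the paper's 1-based `ã_j` read as the 0-based `tt.getD (j - 1) 0`.
local notation:max "𝔅[" tt "]" => Bset (fun j => List.getD tt (j - 1) 0) (sizeL tt)

section BitSets

variable (tt : List ℕ) (j : ℕ)

lemma ltrims_getD_subset : ltrims (tt.getD (j + 1) 0) ⊆ 𝔅[tt] (j + 2) :=
  ltrims_subset_Bset_add_two _ _ (Finset.mem_insert_self _ _)

lemma ltrims_getD_add_getD_subset :
    ltrims (tt.getD j 0 + tt.getD (j + 1) 0) ⊆ 𝔅[tt] (j + 2) :=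
  ltrims_subset_Bset_add_two _ _ (Finset.mem_insert_of_mem (Finset.mem_insert_self _ _))

lemma ltrims_two_pow_add_getD_subset {a : ℕ} (ha : a < sizeL tt) :
    ltrims (2 ^ a + tt.getD (j + 1) 0) ⊆ 𝔅[tt] (j + 2) :=
  ltrims_subset_Bset_add_two _ _ <| Finset.mem_insert_of_mem <| Finset.mem_insert_of_mem <|
    Finset.mem_union_left _ (Finset.mem_image.mpr ⟨a, Finset.mem_range.mpr ha, rfl⟩)

lemma ltrims_add_getD_subset {b : ℕ} (hb : b ∈ 𝔅[tt] (j + 1)) :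
    ltrims (b + tt.getD (j + 1) 0) ⊆ 𝔅[tt] (j + 2) :=
  ltrims_subset_Bset_add_two _ _ <| Finset.mem_insert_of_mem <| Finset.mem_insert_of_mem <|
    Finset.mem_union_right _ (Finset.mem_image.mpr ⟨b, hb, rfl⟩)

end BitSets

/-- The conclusion of the key lemma for a not fully dyadic `t`, together with the facts that make
it invariant along the `V∂`-graph; `sum_le` bounds the dyadic entries by `2 ^ sizeL tt`. -/
structure Admissible (tt t : List ℕ) : Prop where
  pos : posL t
  sum_le : t.sum ≤ tt.sum
  dyLen_pos : 0 < dyLen t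
  dyLen_lt : dyLen t < t.length
  not_srcA : ¬ srcA t
  getD_right : ∀ i, dyLen t + 1 ≤ i → i < t.length → t.getD i 0 = tt.getD i 0
  breakpoint : t.getD (dyLen t) 0 = tt.getD (dyLen t) 0 ∨
    (t.getD (dyLen t) 0 < (t.take (dyLen t)).foldr max 0 ∧
      t.getD (dyLen t) 0 ∈ 𝔅[tt] (dyLen t + 1))

lemma admissible_of_descent {tt t : List ℕ} {k : ℕ} (hpos : posL t) (hsum : t.sum ≤ tt.sum)
    (hk : k < t.length) (hpow : ∀ m < k, IsPowTwo (t.getD m 0))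
    (hdesc : ∃ j, j + 1 ≤ k ∧ t.getD (j + 1) 0 < t.getD j 0)
    (hraw : ∀ m, k + 1 ≤ m → m < t.length → t.getD m 0 = tt.getD m 0)
    (hbp : ¬ IsPowTwo (t.getD k 0) → t.getD k 0 = tt.getD k 0 ∨
      (t.getD k 0 < (t.take k).foldr max 0 ∧ t.getD k 0 ∈ 𝔅[tt] (k + 1))) :
    fullyDyadic t ∨ Admissible tt t := by
  refine or_iff_not_imp_left.mpr fun hfd => ?_
  have hkq : k ≤ dyLen t := le_dyLen hk.le hpow
  have hq : dyLen t < t.length := by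
    have := dyLen_le_length t
    unfold fullyDyadic at hfd
    omega
  obtain ⟨j, hjk, hj⟩ := hdesc
  refine ⟨hpos, hsum, by omega, hq, ?_, fun i hi hit => hraw i (by omega) hit, ?_⟩
  · rintro ⟨-, hmono, hpeak⟩
    rcases (show j + 1 ≤ dyLen t by omega).lt_or_eq with h | h
    · exact (hmono j h).not_gt hj
    · exact (hpeak j h).not_ge (h ▸ hj.le)
  · rcases hkq.lt_or_eq with h | h
    · exact Or.inl (hraw _ h hq)
    · subst h
      exact hbp (not_isPowTwo_getD_dyLen hq)

lemma VbcA_admissible {tt σ : List ℕ} (hd : dyLen σ < σ.length) (hpos : posL σ)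
    (hsum : σ.sum ≤ tt.sum)
    (hraw : ∀ m, dyLen σ + 1 ≤ m → m < σ.length → σ.getD m 0 = tt.getD (m + 1) 0)
    (hbp : ltrim (σ.getD (dyLen σ) 0) = tt.getD (dyLen σ + 1) 0 ∨
      ltrims (σ.getD (dyLen σ) 0) ⊆ 𝔅[tt] (dyLen σ + 2)) :
    fullyDyadic (VbcA σ) ∨ Admissible tt (VbcA σ) := by
  have hc := hpos _ (getD_mem hd)
  have hlen := length_VbcA hd
  refine admissible_of_descent (k := dyLen σ + 1) (posL_VbcA hd hpos)
    (by rw [sum_VbcA hd hc]; exact hsum) (by omega) (fun m hm => ?_)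
    ⟨dyLen σ, le_rfl, ?_⟩ (fun m hm hml => ?_) (fun _ => ?_)
  · rcases (Nat.lt_succ_iff.mp hm).lt_or_eq with h | rfl
    · rw [VbcA_getD_of_lt h]; exact isPowTwo_getD_of_lt_dyLen h
    · rw [VbcA_getD_dyLen hd]; exact isPowTwo_lpow _
  · rw [VbcA_getD_dyLen_add_one hd, VbcA_getD_dyLen hd]
    exact ltrim_lt_lpow _
  · rw [VbcA_getD_of_le hd (by omega), hraw _ (by omega) (by omega), Nat.sub_add_cancel (by omega)]
  · rw [VbcA_getD_dyLen_add_one hd]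
    refine hbp.imp id fun hsub => ⟨(ltrim_lt_lpow _).trans_le ?_, ?_⟩
    · rw [← VbcA_getD_dyLen hd]
      exact le_foldr_max (getD_mem_take (by omega) (by omega))
    · exact hsub (ltrim_mem_ltrims (ltrim_pos hc (not_isPowTwo_getD_dyLen hd)).ne')

namespace Admissible

variable {tt t : List ℕ}

lemma ltrims_breakpoint_subset (ht : Admissible tt t) :
    ltrims (t.getD (dyLen t) 0) ⊆ 𝔅[tt] (dyLen t + 1) := by
  obtain ⟨p, hp⟩ : ∃ p, dyLen t = p + 1 := ⟨_, (Nat.succ_pred_eq_of_pos ht.dyLen_pos).symm⟩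
  rcases ht.breakpoint with h | ⟨-, h⟩
  · rw [h, hp]; exact ltrims_getD_subset tt p
  · exact ltrims_subset_Bset _ _ h

lemma VbcA_of_shift {σ : List ℕ} (ht : Admissible tt t) (hpos : posL σ) (hsum : σ.sum ≤ t.sum)
    (hlen : σ.length + 1 = t.length) (hd : dyLen σ + 1 = dyLen t)
    (hshift : ∀ m, dyLen σ ≤ m → σ.getD m 0 = t.getD (m + 1) 0) :
    fullyDyadic (VbcA σ) ∨ Admissible tt (VbcA σ) := by
  have hdσ : dyLen σ < σ.length := by have := ht.dyLen_lt; omega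
  refine VbcA_admissible hdσ hpos (hsum.trans ht.sum_le) (fun m hm hml => ?_) (Or.inr ?_)
  · rw [hshift m (by omega)]; exact ht.getD_right _ (by omega) (by omega)
  · rw [hshift _ le_rfl, hd, show dyLen σ + 2 = dyLen t + 1 by omega]
    exact ht.ltrims_breakpoint_subset

lemma VbcA_faceN_zero (ht : Admissible tt t) (hpos : posL (faceN 0 t)) :
    fullyDyadic (VbcA (faceN 0 t)) ∨ Admissible tt (VbcA (faceN 0 t)) := by
  have hq := ht.dyLen_lt
  have hq₀ := ht.dyLen_pos
  rw [faceN_zero] at hpos ⊢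
  refine ht.VbcA_of_shift hpos ?_ (by rw [List.length_tail]; omega) ?_ fun m _ => getD_tail m
  · rw [← List.drop_one, ← List.sum_take_add_sum_drop t 1]; omega
  · rw [dyLen_eq (k := dyLen t - 1) (by rw [List.length_tail]; omega)]
    · omega
    · intro m hm; rw [getD_tail]; exact isPowTwo_getD_of_lt_dyLen (by omega)
    · rw [getD_tail, Nat.sub_add_cancel hq₀]; exact not_isPowTwo_getD_dyLen hq

lemma VbcA_faceN_of_lt_dyLen_of_isPowTwo {k : ℕ} (ht : Admissible tt t) (hk : k + 1 < dyLen t)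
    (hc : IsPowTwo (t.getD k 0 + t.getD (k + 1) 0)) (hpos : posL (faceN (k + 1) t)) :
    fullyDyadic (VbcA (faceN (k + 1) t)) ∨ Admissible tt (VbcA (faceN (k + 1) t)) := by
  have hq := ht.dyLen_lt
  have hkt : k + 1 < t.length := by omega
  have hge : ∀ m, k + 1 ≤ m → (faceN (k + 1) t).getD m 0 = t.getD (m + 1) 0 :=
    fun m hm => faceN_getD_of_le (by omega) hkt hm
  have hd : dyLen (faceN (k + 1) t) = dyLen t - 1 := by
    refine dyLen_eq (by rw [length_faceN (by omega) hkt]; omega)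
      (fun m hm => isPowTwo_faceN_getD hk hq.le (fun m => isPowTwo_getD_of_lt_dyLen) hc hm) ?_
    rw [hge _ (by omega), Nat.sub_add_cancel ht.dyLen_pos]
    exact not_isPowTwo_getD_dyLen hq
  exact ht.VbcA_of_shift hpos (sum_faceN (by omega) hkt).le
    (by rw [length_faceN (by omega) hkt]; omega) (by omega) fun m hm => hge m (by omega)

lemma VbcA_faceN_of_lt_dyLen_of_not_isPowTwo {k : ℕ} (ht : Admissible tt t)
    (hk : k + 1 < dyLen t) (hc : ¬ IsPowTwo (t.getD k 0 + t.getD (k + 1) 0))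
    (hpos : posL (faceN (k + 1) t)) :
    fullyDyadic (VbcA (faceN (k + 1) t)) ∨ Admissible tt (VbcA (faceN (k + 1) t)) := by
  have hkt : k + 1 < t.length := by have := ht.dyLen_lt; omega
  have hpow : ∀ m < dyLen t, IsPowTwo (t.getD m 0) := fun m => isPowTwo_getD_of_lt_dyLen
  have hd := dyLen_faceN_of_not_isPowTwo hkt (by omega) hc
  have hget := VbcA_faceN_getD hkt hd
  have hlen := length_VbcA_faceN hkt hd
  refine admissible_of_descent (k := dyLen t) (posL_VbcA (dyLen_faceN_lt_length hkt hd) hpos)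
    (by rw [sum_VbcA_faceN hkt hd hpos]; exact ht.sum_le) (by rw [hlen]; exact ht.dyLen_lt)
    (fun m hm => ?_) ⟨k, by omega, ?_⟩ (fun m hm hml => ?_) (fun _ => ?_)
  · rw [hget]
    split_ifs
    · exact isPowTwo_lpow _
    · exact isPowTwo_ltrim_add (hpow k (by omega)) (hpow (k + 1) hk) hc
    · exact hpow m hm
  · rw [hget, hget, if_neg (by omega), if_pos rfl, if_pos rfl]
    exact ltrim_lt_lpow _
  · rw [hget, if_neg (by omega), if_neg (by omega)]
    exact ht.getD_right m hm (by omega)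
  · rw [hget, if_neg (by omega), if_neg (by omega)]
    refine ht.breakpoint.imp_right fun ⟨hmax, hmem⟩ =>
      ⟨lt_foldr_max_take_of_forall_le hmax fun m hm hml => ?_, hmem⟩
    by_cases hm' : m = k ∨ m = k + 1
    · refine ⟨k, by omega, by omega, ?_⟩
      rw [hget, if_pos rfl]
      refine le_lpow (hpow m hm) ?_
      rcases hm' with rfl | rfl <;> omega
    · refine ⟨m, hm, by omega, ?_⟩
      rw [hget, if_neg (by omega), if_neg (by omega)]

lemma VbcA_faceN_of_isPowTwo {i : ℕ} (ht : Admissible tt t) (hi : dyLen t ≤ i)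
    (hi' : i ≤ dyLen t + 1) (hit : i < t.length) (hc : IsPowTwo (t.getD (i - 1) 0 + t.getD i 0))
    (hpos : posL (faceN i t)) (hsrc : srcA (faceN i t)) :
    fullyDyadic (VbcA (faceN i t)) ∨ Admissible tt (VbcA (faceN i t)) := by
  have hi0 : i ≠ 0 := by have := ht.dyLen_pos; omega
  have hge : ∀ m, i ≤ m → (faceN i t).getD m 0 = t.getD (m + 1) 0 :=
    fun m hm => faceN_getD_of_le hi0 hit hm
  have hd : i ≤ dyLen (faceN i t) := by
    refine le_dyLen (by rw [length_faceN hi0 hit]; omega) fun m hm => ?_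
    rcases (Nat.le_sub_one_of_lt hm).lt_or_eq with h | rfl
    · rw [faceN_getD_of_lt hi0 hit h]; exact isPowTwo_getD_of_lt_dyLen (by omega)
    · rwa [faceN_getD_sub_one hi0 hit]
  have hlen := length_faceN hi0 hit
  refine VbcA_admissible hsrc.1 hpos ((sum_faceN hi0 hit).trans_le ht.sum_le)
    (fun m hm hml => ?_) (Or.inr ?_)
  · rw [hge m (by omega)]; exact ht.getD_right _ (by omega) (by omega)
  · rw [hge _ hd, ht.getD_right _ (by omega) (by have := hsrc.1; omega)]
    exact ltrims_getD_subset tt _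

lemma ltrim_two_pow_add_breakpoint_mem {k a : ℕ} (ht : Admissible tt t) (hk : k + 1 = dyLen t)
    (ha : t.getD k 0 = 2 ^ a) (hne : ltrim (2 ^ a + t.getD (k + 1) 0) ≠ 0)
    (hlt : ∀ m < k, t.getD m 0 < 2 ^ a + t.getD (k + 1) 0) :
    ltrim (2 ^ a + t.getD (k + 1) 0) ∈ 𝔅[tt] (k + 2) := by
  have hkt : k + 1 < t.length := hk ▸ ht.dyLen_lt
  rcases ht.breakpoint with hraw | ⟨hmax, hmem⟩
  · have ha' : a < sizeL tt := by
      rw [← Nat.pow_lt_pow_iff_right one_lt_two, ← ha]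
      calc t.getD k 0 ≤ t.sum := List.le_sum_of_mem (getD_mem (by omega))
        _ ≤ tt.sum := ht.sum_le
        _ < 2 ^ sizeL tt := sum_lt_two_pow_sizeL tt
    rw [← hk] at hraw
    rw [hraw] at hne ⊢
    exact ltrims_two_pow_add_getD_subset tt k ha' (ltrim_mem_ltrims hne)
  -- the prefix maximum above `b` is a power of two in `(b, 2 ^ a + b]`
  rw [← hk] at hmax hmem
  obtain ⟨z, hz, hbz⟩ := exists_lt_of_lt_foldr_max hmax
  obtain ⟨m, hm, -, rfl⟩ := exists_getD_eq_of_mem_take hz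
  have hmc : t.getD m 0 ≤ 2 ^ a + t.getD (k + 1) 0 := by
    rcases (Nat.lt_succ_iff.mp hm).lt_or_eq with h | rfl
    · exact (hlt m h).le
    · omega
  rcases ltrim_two_pow_add_eq_or_mem_ltrims (ht.pos _ (getD_mem hkt))
    (isPowTwo_getD_of_lt_dyLen (by omega)) hbz hmc hne with h | h
  · rwa [h]
  · exact ltrims_subset_Bset _ _ hmem h

lemma VbcA_faceN_dyLen_of_not_isPowTwo {k : ℕ} (ht : Admissible tt t) (hk : k + 1 = dyLen t)
    (hc : ¬ IsPowTwo (t.getD k 0 + t.getD (k + 1) 0)) (hpos : posL (faceN (k + 1) t))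
    (hsrc : srcA (faceN (k + 1) t)) :
    fullyDyadic (VbcA (faceN (k + 1) t)) ∨ Admissible tt (VbcA (faceN (k + 1) t)) := by
  have hkt : k + 1 < t.length := hk ▸ ht.dyLen_lt
  have hd := dyLen_faceN_of_not_isPowTwo hkt (by omega) hc
  have hget := VbcA_faceN_getD hkt hd
  have hlen := length_VbcA_faceN hkt hd
  obtain ⟨a, ha⟩ := (⟨_, isPowTwo_getD_of_lt_dyLen (by omega)⟩ : ∃ a, t.getD k 0 = 2 ^ a)
  refine admissible_of_descent (k := k + 1) (posL_VbcA (dyLen_faceN_lt_length hkt hd) hpos)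
    (by rw [sum_VbcA_faceN hkt hd hpos]; exact ht.sum_le) (by omega) (fun m hm => ?_)
    ⟨k, le_rfl, ?_⟩ (fun m hm hml => ?_) (fun _ => Or.inr ⟨?_, ?_⟩)
  · rw [hget]
    split_ifs
    · exact isPowTwo_lpow _
    · omega
    · exact isPowTwo_getD_of_lt_dyLen (by omega)
  · rw [hget, hget, if_neg (by omega), if_pos rfl, if_pos rfl]
    exact ltrim_lt_lpow _
  · rw [hget, if_neg (by omega), if_neg (by omega)]
    exact ht.getD_right m (by omega) (by omega)
  · rw [hget, if_neg (by omega), if_pos rfl]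
    refine (ltrim_lt_lpow _).trans_le (List.le_max_of_le' 0 (getD_mem_take
      (l := VbcA (faceN (k + 1) t)) (m := k) (k := k + 1) (by omega) (by omega)) ?_)
    rw [hget, if_pos rfl]
  · rw [hget, if_neg (by omega), if_pos rfl, ha]
    refine ht.ltrim_two_pow_add_breakpoint_mem hk ha
      (ltrim_pos (by have := ht.pos _ (getD_mem hkt); omega) (ha ▸ hc)).ne' fun m hm => ?_
    have := hsrc.getD_lt_getD_dyLen (m := m) (by omega)
    rwa [faceN_getD_of_lt (by omega) hkt (by omega), hd, faceN_add_one_getD_self hkt, ha] at this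

lemma VbcA_faceN_dyLen_add_one_of_not_isPowTwo (ht : Admissible tt t)
    (hit : dyLen t + 1 < t.length) (hc : ¬ IsPowTwo (t.getD (dyLen t) 0 + t.getD (dyLen t + 1) 0))
    (hpos : posL (faceN (dyLen t + 1) t)) :
    fullyDyadic (VbcA (faceN (dyLen t + 1) t)) ∨ Admissible tt (VbcA (faceN (dyLen t + 1) t)) := by
  have hcσ := faceN_add_one_getD_self hit
  have hd := dyLen_faceN_of_not_isPowTwo hit le_rfl hc
  have hge : ∀ m, dyLen t + 1 ≤ m → (faceN (dyLen t + 1) t).getD m 0 = t.getD (m + 1) 0 :=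
    fun m hm => faceN_getD_of_le (by omega) hit hm
  have hlen := length_faceN (by omega) hit
  refine VbcA_admissible (by omega) hpos ((sum_faceN (by omega) hit).trans_le ht.sum_le)
    (fun m hm hml => ?_) (Or.inr ?_)
  · rw [hge m (by omega)]; exact ht.getD_right _ (by omega) (by omega)
  rw [hd, hcσ, ht.getD_right _ le_rfl hit]
  rcases ht.breakpoint with h | ⟨-, h⟩
  · rw [h]; exact ltrims_getD_add_getD_subset tt _
  · exact ltrims_add_getD_subset tt _ h

lemma not_srcA_faceN_length (ht : Admissible tt t) : ¬ srcA (faceN t.length t) := by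
  have hq := ht.dyLen_lt
  rw [faceN_length_self (by omega)]
  rcases (Nat.le_sub_one_of_lt hq).lt_or_eq with h | h
  · exact fun hs => ht.not_srcA <| srcA_of_srcA_of_getD_eq (by rw [List.length_dropLast]; omega) hq
      (fun m hm => getD_dropLast (by omega)) hs
  · refine not_srcA_of_fullyDyadic (fullyDyadic_iff.mpr fun m hm => ?_)
    rw [List.length_dropLast] at hm
    rw [getD_dropLast hm]
    exact isPowTwo_getD_of_lt_dyLen (by omega)

lemma not_srcA_faceN_of_dyLen_add_two_le {i : ℕ} (ht : Admissible tt t) (hi : dyLen t + 2 ≤ i)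
    (hit : i < t.length) : ¬ srcA (faceN i t) :=
  fun hs => ht.not_srcA <| srcA_of_srcA_of_getD_eq
    (by rw [length_faceN (by omega) hit]; omega) ht.dyLen_lt
    (fun m hm => faceN_getD_of_lt (by omega) hit (by omega)) hs

lemma VbcA_faceN {i : ℕ} (ht : Admissible tt t) (hi : i ≤ t.length) (hpos : posL (faceN i t))
    (hsrc : srcA (faceN i t)) :
    fullyDyadic (VbcA (faceN i t)) ∨ Admissible tt (VbcA (faceN i t)) := by
  rcases hi.lt_or_eq with hit | rfl
  swap
  · exact absurd hsrc ht.not_srcA_faceN_length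
  rcases Nat.eq_zero_or_pos i with rfl | hi0
  · exact ht.VbcA_faceN_zero hpos
  obtain ⟨k, rfl⟩ := Nat.exists_eq_add_one_of_ne_zero hi0.ne'
  have hk' : k + 1 - 1 = k := Nat.add_sub_cancel k 1
  obtain hk | hk | rfl | hk :
      k + 1 < dyLen t ∨ k + 1 = dyLen t ∨ k = dyLen t ∨ dyLen t + 2 ≤ k + 1 := by omega
  · by_cases hc : IsPowTwo (t.getD k 0 + t.getD (k + 1) 0)
    · exact ht.VbcA_faceN_of_lt_dyLen_of_isPowTwo hk hc hpos
    · exact ht.VbcA_faceN_of_lt_dyLen_of_not_isPowTwo hk hc hpos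
  · by_cases hc : IsPowTwo (t.getD k 0 + t.getD (k + 1) 0)
    · exact ht.VbcA_faceN_of_isPowTwo (by omega) (by omega) hit (hk' ▸ hc) hpos hsrc
    · exact ht.VbcA_faceN_dyLen_of_not_isPowTwo hk hc hpos hsrc
  · by_cases hc : IsPowTwo (t.getD (dyLen t) 0 + t.getD (dyLen t + 1) 0)
    · exact ht.VbcA_faceN_of_isPowTwo (by omega) (by omega) hit (hk' ▸ hc) hpos hsrc
    · exact ht.VbcA_faceN_dyLen_add_one_of_not_isPowTwo hit hc hpos
  · exact absurd hsrc (ht.not_srcA_faceN_of_dyLen_add_two_le hk hit)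

end Admissible

lemma fullyDyadic_VbcA_faceN {t : List ℕ} {i : ℕ} (ht : fullyDyadic t) (hi : i ≤ t.length)
    (hsrc : srcA (faceN i t)) : fullyDyadic (VbcA (faceN i t)) := by
  have hpow := fullyDyadic_iff.mp ht
  rcases Nat.eq_zero_or_pos i with rfl | hi0
  · refine absurd hsrc (not_srcA_of_fullyDyadic (fullyDyadic_iff.mpr fun m hm => ?_))
    rw [faceN_zero, List.length_tail] at hm
    rw [faceN_zero, getD_tail]
    exact hpow _ (by omega)
  rcases hi.lt_or_eq with hit | rfl
  swap
  · refine absurd hsrc (not_srcA_of_fullyDyadic (fullyDyadic_iff.mpr fun m hm => ?_))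
    rw [faceN_length_self (by omega), List.length_dropLast] at hm
    rw [faceN_length_self (by omega), getD_dropLast hm]
    exact hpow _ (by omega)
  obtain ⟨k, rfl⟩ := Nat.exists_eq_add_one_of_ne_zero hi0.ne'
  have hdy : dyLen t = t.length := ht
  by_cases hc : IsPowTwo (t.getD k 0 + t.getD (k + 1) 0)
  · refine absurd hsrc (not_srcA_of_fullyDyadic (fullyDyadic_iff.mpr fun m hm => ?_))
    rw [length_faceN (by omega) hit] at hm
    exact isPowTwo_faceN_getD hit le_rfl hpow hc hm
  have hd := dyLen_faceN_of_not_isPowTwo hit (by omega) hc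
  refine fullyDyadic_iff.mpr fun m hm => ?_
  rw [length_VbcA_faceN hit hd] at hm
  rw [VbcA_faceN_getD hit hd]
  split_ifs
  · exact isPowTwo_lpow _
  · exact isPowTwo_ltrim_add (hpow k (by omega)) (hpow (k + 1) hit) hc
  · exact hpow m hm

lemma VbcA_admissible_self {s : List ℕ} (hs : srcA s) (hpos : posL s) :
    fullyDyadic (VbcA s) ∨ Admissible (VbcA s) (VbcA s) :=
  VbcA_admissible hs.1 hpos (sum_VbcA hs.1 (hpos _ (getD_mem hs.1))).ge
    (fun m hm _ => by rw [VbcA_getD_of_le hs.1 (by omega), Nat.add_sub_cancel])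
    (Or.inl (VbcA_getD_dyLen_add_one hs.1).symm)

lemma fullyDyadic_or_admissible_of_VbcRel {tt x y : List ℕ}
    (hx : fullyDyadic x ∨ Admissible tt x) (hxy : VbcRel x y) :
    fullyDyadic y ∨ Admissible tt y := by
  rcases hxy with ⟨hs, -⟩ | ⟨hs, rfl⟩
  · exact absurd hs (hx.elim not_srcA_of_fullyDyadic Admissible.not_srcA)
  · exact Or.inl (fullyDyadic_VbcB hs)

def ReachInv (tt x : List ℕ) : Prop :=
  (fullyDyadic x ∨ Admissible tt x) ∨
    ∃ τ i, (fullyDyadic τ ∨ Admissible tt τ) ∧ i ≤ τ.length ∧ x = faceN i τ ∧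
      ¬ ∃ s, posL s ∧ VbcRel s x

lemma ReachInv.of_edgeBc {tt x y : List ℕ} (hx : ReachInv tt x) (hxy : edgeBc x y) :
    ReachInv tt y := by
  rcases hxy with ⟨hpos, hrel⟩ | ⟨htgt, i, hi, rfl, -, -, hnt⟩
  · refine Or.inl ?_
    rcases hx with hx | ⟨τ, i, hτ, hi, rfl, -⟩
    · exact fullyDyadic_or_admissible_of_VbcRel hx hrel
    rcases hrel with ⟨hs, rfl⟩ | ⟨hs, rfl⟩
    · exact hτ.elim (fun h => Or.inl (fullyDyadic_VbcA_faceN h hi hs)) (·.VbcA_faceN hi hpos hs)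
    · exact Or.inl (fullyDyadic_VbcB hs)
  · rcases hx with hx | ⟨-, -, -, -, -, hnt'⟩
    · exact Or.inr ⟨x, i, hx, hi, rfl, hnt⟩
    · exact absurd htgt hnt'

lemma ReachInv.of_reflTransGen {tt x : List ℕ} (htt : fullyDyadic tt ∨ Admissible tt tt)
    (h : Relation.ReflTransGen edgeBc tt x) : ReachInv tt x := by
  induction h with
  | refl => exact Or.inl htt
  | tail _ hedge ih => exact ih.of_edgeBc hedge

theorem stmt19_general (tτ τ : List ℕ)
    (htgt : ∃ s, posL s ∧ VbcRel s tτ)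
    (hreach : Relation.ReflTransGen edgeBc tτ τ)
    (hτtgt : ∃ s, posL s ∧ VbcRel s τ)
    (hnfd : ¬ fullyDyadic τ) :
    (∀ i, dyLen τ + 1 ≤ i → i < τ.length → τ.getD i 0 = tτ.getD i 0) ∧
    (τ.getD (dyLen τ) 0 = tτ.getD (dyLen τ) 0 ∨
      (τ.getD (dyLen τ) 0 < (τ.take (dyLen τ)).foldr max 0 ∧
        τ.getD (dyLen τ) 0 ∈ Bset (fun j => tτ.getD (j - 1) 0) (sizeL tτ) (dyLen τ + 1))) := by
  have hstart : fullyDyadic tτ ∨ Admissible tτ tτ := by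
    obtain ⟨s, hpos, ⟨hs, rfl⟩ | ⟨hs, rfl⟩⟩ := htgt
    · exact VbcA_admissible_self hs hpos
    · exact Or.inl (fullyDyadic_VbcB hs)
  rcases ReachInv.of_reflTransGen hstart hreach with (hfd | ht) | ⟨-, -, -, -, -, hnt⟩
  · exact absurd hfd hnfd
  · exact ⟨ht.getD_right, ht.breakpoint⟩
  · exact absurd hτtgt hnt

/-- Key lemma for the bit-chipping field: if `τ = [2^{i_1} | ⋯ | 2^{i_q} | b | a_{q+2} | ⋯]`
is a not-fully-dyadic target reachable from a target `τ̃ = [ã_1 | ⋯ | ã_k]` of bit-size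
`n` in the `V∂`-graph, then the right part is inherited from `τ̃` (`a_i = ã_i` for all
`i ≥ q + 2`), and either `b = ã_{q+1}` (`τ` is raw), or `b` is smaller than the maximum
of the dyadic part of `τ` and `b ∈ B_{q+1}`. -/
theorem stmt19 (tτ τ : List ℕ) (hpos : posL tτ)
    (htgt : ∃ s, posL s ∧ VbcRel s tτ)
    (hreach : Relation.ReflTransGen edgeBc tτ τ)
    (hτtgt : ∃ s, posL s ∧ VbcRel s τ)
    (hnfd : ¬ fullyDyadic τ) :
    (∀ i, dyLen τ + 1 ≤ i → i < τ.length → τ.getD i 0 = tτ.getD i 0) ∧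
    (τ.getD (dyLen τ) 0 = tτ.getD (dyLen τ) 0 ∨
      (τ.getD (dyLen τ) 0 < (τ.take (dyLen τ)).foldr max 0 ∧
        τ.getD (dyLen τ) 0 ∈ Bset (fun j => tτ.getD (j - 1) 0) (sizeL tτ) (dyLen τ + 1))) :=
  stmt19_general tτ τ htgt hreach hτtgt hnfd
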